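/- Under the hypotheses of the bi-umbilical Frenet system — n ≥ 3, D ⊂ ℝ² open connected, smooth maps z, X, Y, N, e₁, …, e_{n−2} : D → ℝ^{n+1} with (X, Y, e₁, …, e_{n−2}, N) orthonormal at every point, z_u = √E·X, z_v = √G·Y (E, G > 0 smooth), and smooth γ₁, γ₂, ν, λᵢ with ν never zero satisfying X_u = √E(γ₁Y + Σᵢλᵢeᵢ + νN), Y_u = −√E·γ₁X, (eᵢ)_u = −√E·λᵢX, N_u = −√E·νX, X_v = √G·γ₂Y, Y_v = √G(−γ₂X + Σᵢλᵢeᵢ + νN), (eᵢ)_v = −√G·λᵢY, N_v = −√G·νY — assume in addition that λᵢ ≡ 0 for all i. Then the map p₀ := z + N/ν is constant on D, so that |z(u,v) − p₀| = 1/|ν| for all (u,v) ∈ D; moreover, for any fixed (u₀,v₀) ∈ D, z(u,v) − z(u₀,v₀) lies in the 3-dimensional linear subspace spanned by X(u₀,v₀), Y(u₀,v₀), N(u₀,v₀) for all (u,v) ∈ D. Hence the surface z lies on a two-dimensional sphere of radius 1/|ν| in a three-dimensional affine subspace of ℝ^{n+1}. -/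

import Mathlib

open Real Set
open scoped RealInnerProductSpace

noncomputable section

/-- Partial derivative in the first (`u`) direction. -/
def pu {α : Type*} [NormedAddCommGroup α] [NormedSpace ℝ α]
    (f : ℝ × ℝ → α) (p : ℝ × ℝ) : α :=
  fderiv ℝ f p (1, 0)

/-- Partial derivative in the second (`v`) direction. -/
def pv {α : Type*} [NormedAddCommGroup α] [NormedSpace ℝ α]
    (f : ℝ × ℝ → α) (p : ℝ × ℝ) : α :=
  fderiv ℝ f p (0, 1)

/-- The family `(X, Y, e₁, …, e_{n-2}, N)` is an orthonormal system in `ℝ^{n+1}`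
at every point of `D`. -/
def OrthFrame (n : ℕ) (D : Set (ℝ × ℝ))
    (X Y N : ℝ × ℝ → EuclideanSpace ℝ (Fin (n + 1)))
    (e : Fin (n - 2) → ℝ × ℝ → EuclideanSpace ℝ (Fin (n + 1))) : Prop :=
  ∀ p ∈ D,
    ⟪X p, X p⟫ = 1 ∧ ⟪Y p, Y p⟫ = 1 ∧ ⟪N p, N p⟫ = 1 ∧
    ⟪X p, Y p⟫ = 0 ∧ ⟪X p, N p⟫ = 0 ∧ ⟪Y p, N p⟫ = 0 ∧
    (∀ i, ⟪e i p, e i p⟫ = 1 ∧ ⟪X p, e i p⟫ = 0 ∧ ⟪Y p, e i p⟫ = 0 ∧ ⟪N p, e i p⟫ = 0) ∧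
    (∀ i j, i ≠ j → ⟪e i p, e j p⟫ = 0)

section helpers
variable {F : Type*} [NormedAddCommGroup F] [NormedSpace ℝ F]

lemma diffAt_of_cd {D : Set (ℝ × ℝ)} (hD : IsOpen D) {f : ℝ × ℝ → F}
    (hf : ContDiffOn ℝ (⊤ : ℕ∞) f D) {p : ℝ × ℝ} (hp : p ∈ D) : DifferentiableAt ℝ f p :=
  (hf.contDiffAt (hD.mem_nhds hp)).differentiableAt (by simp)

lemma pd_congr {D : Set (ℝ × ℝ)} (hD : IsOpen D) {f g : ℝ × ℝ → F}
    (h : EqOn f g D) {p : ℝ × ℝ} (hp : p ∈ D) : fderiv ℝ f p = fderiv ℝ g p :=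
  (h.eventuallyEq_of_mem (hD.mem_nhds hp)).fderiv_eq

lemma pd_smul {g : ℝ × ℝ → ℝ} {V : ℝ × ℝ → F} {p : ℝ × ℝ} (hg : DifferentiableAt ℝ g p)
    (hV : DifferentiableAt ℝ V p) (w : ℝ × ℝ) :
    fderiv ℝ (fun q => g q • V q) p w = (fderiv ℝ g p w) • V p + g p • fderiv ℝ V p w := by
  rw [fderiv_fun_smul hg hV]; simp [add_comm]

lemma pd_add {f g : ℝ × ℝ → F} {p : ℝ × ℝ} (hf : DifferentiableAt ℝ f p)
    (hg : DifferentiableAt ℝ g p) (w : ℝ × ℝ) :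
    fderiv ℝ (fun q => f q + g q) p w = fderiv ℝ f p w + fderiv ℝ g p w := by
  rw [fderiv_fun_add hf hg]; simp

lemma pd_mul {f g : ℝ × ℝ → ℝ} {p : ℝ × ℝ} (hf : DifferentiableAt ℝ f p)
    (hg : DifferentiableAt ℝ g p) (w : ℝ × ℝ) :
    fderiv ℝ (fun q => f q * g q) p w = (fderiv ℝ f p w) * g p + f p * fderiv ℝ g p w := by
  rw [fderiv_fun_mul hf hg]; simp [add_comm]; ring

lemma pd_clm {E : Type*} [NormedAddCommGroup E] [NormedSpace ℝ E]
    (Q : E →L[ℝ] F) {X : ℝ × ℝ → E} {p : ℝ × ℝ} (hX : DifferentiableAt ℝ X p) (w : ℝ × ℝ) :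
    fderiv ℝ (fun q => Q (X q)) p w = Q (fderiv ℝ X p w) := by
  have h := (Q.hasFDerivAt.comp p hX.hasFDerivAt).fderiv
  show fderiv ℝ (⇑Q ∘ X) p w = _
  rw [h]; rfl

lemma mixed_symm {D : Set (ℝ × ℝ)} (hD : IsOpen D) {f : ℝ × ℝ → F}
    (hf : ContDiffOn ℝ (⊤ : ℕ∞) f D) {p : ℝ × ℝ} (hp : p ∈ D) :
    pu (pv f) p = pv (pu f) p := by
  have hfp : ContDiffAt ℝ (⊤ : ℕ∞) f p := hf.contDiffAt (hD.mem_nhds hp)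
  have hsym : ∀ v w, fderiv ℝ (fderiv ℝ f) p v w = fderiv ℝ (fderiv ℝ f) p w v :=
    hfp.isSymmSndFDerivAt (by rw [minSmoothness_of_isRCLikeNormedField]; exact WithTop.coe_le_coe.2 le_top)
  have hdiff : DifferentiableAt ℝ (fderiv ℝ f) p :=
    (hfp.fderiv_right (m := 1) ((by exact WithTop.coe_le_coe.2 le_top))).differentiableAt one_ne_zero
  have h1 : fderiv ℝ (fun q => (fderiv ℝ f q) ((0:ℝ), (1:ℝ))) p =
      ((fderiv ℝ f p).comp (0 : (ℝ×ℝ) →L[ℝ] (ℝ×ℝ))) +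
        (fderiv ℝ (fderiv ℝ f) p).flip ((0:ℝ),(1:ℝ)) :=
    (hdiff.hasFDerivAt.clm_apply (hasFDerivAt_const _ _)).fderiv
  have h2 : fderiv ℝ (fun q => (fderiv ℝ f q) ((1:ℝ), (0:ℝ))) p =
      ((fderiv ℝ f p).comp (0 : (ℝ×ℝ) →L[ℝ] (ℝ×ℝ))) +
        (fderiv ℝ (fderiv ℝ f) p).flip ((1:ℝ),(0:ℝ)) :=
    (hdiff.hasFDerivAt.clm_apply (hasFDerivAt_const _ _)).fderiv
  show fderiv ℝ (fun q => (fderiv ℝ f q) ((0:ℝ),(1:ℝ))) p (1,0) =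
    fderiv ℝ (fun q => (fderiv ℝ f q) ((1:ℝ),(0:ℝ))) p (0,1)
  rw [h1, h2]
  simp [hsym]

lemma fderiv_eq_zero_of_partials {f : ℝ × ℝ → F} {p : ℝ × ℝ}
    (h1 : pu f p = 0) (h2 : pv f p = 0) : fderiv ℝ f p = 0 := by
  apply ContinuousLinearMap.ext; intro x
  have hx : (x : ℝ × ℝ) = x.1 • ((1:ℝ),(0:ℝ)) + x.2 • ((0:ℝ),(1:ℝ)) := by
    ext <;> simp
  rw [ContinuousLinearMap.zero_apply, hx, map_add, map_smul, map_smul]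
  rw [show fderiv ℝ f p ((1:ℝ),(0:ℝ)) = pu f p from rfl,
      show fderiv ℝ f p ((0:ℝ),(1:ℝ)) = pv f p from rfl, h1, h2]
  simp

lemma const_of_pd_zero {D : Set (ℝ × ℝ)} (hD : IsOpen D) (hc : IsPreconnected D)
    {f : ℝ × ℝ → F} (hdiff : ∀ x ∈ D, DifferentiableAt ℝ f x)
    (hf : ∀ x ∈ D, fderiv ℝ f x = 0) {p q : ℝ × ℝ} (hp : p ∈ D) (hq : q ∈ D) :
    f p = f q := by
  have loc : ∀ x ∈ D, ∀ᶠ y in nhds x, f y = f x ∧ y ∈ D := by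
    intro x hx
    obtain ⟨r, hr, hball⟩ := Metric.isOpen_iff.1 hD x hx
    have hcball : ∀ y ∈ Metric.ball x r, f y = f x := fun y hy =>
      (convex_ball x r).is_const_of_fderivWithin_eq_zero
        (fun z hz => (hdiff z (hball hz)).differentiableWithinAt)
        (fun z hz => by
          rw [fderivWithin_of_isOpen Metric.isOpen_ball hz]; exact hf z (hball hz))
        hy (Metric.mem_ball_self hr)
    filter_upwards [Metric.isOpen_ball.mem_nhds (Metric.mem_ball_self hr)] with y hy
    exact ⟨hcball y hy, hball hy⟩
  set U : Set (ℝ × ℝ) := {x | x ∈ D ∧ f x = f q} with hU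
  set V : Set (ℝ × ℝ) := {x | x ∈ D ∧ f x ≠ f q} with hV
  have hUopen : IsOpen U := by
    rw [isOpen_iff_eventually]
    rintro x ⟨hxD, hxf⟩
    filter_upwards [loc x hxD] with y ⟨hy1, hy2⟩
    exact ⟨hy2, hy1.trans hxf⟩
  have hVopen : IsOpen V := by
    rw [isOpen_iff_eventually]
    rintro x ⟨hxD, hxf⟩
    filter_upwards [loc x hxD] with y ⟨hy1, hy2⟩
    exact ⟨hy2, hy1.symm ▸ hxf⟩
  by_contra hne
  obtain ⟨w, hwD, ⟨_, hw1⟩, ⟨_, hw2⟩⟩ := hc U V hUopen hVopen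
    (fun x hx => by
      by_cases h : f x = f q
      · exact Or.inl ⟨hx, h⟩
      · exact Or.inr ⟨hx, h⟩)
    ⟨q, hq, hq, rfl⟩ ⟨p, hp, hp, hne⟩
  exact hw2 hw1

end helpers

set_option maxHeartbeats 2000000 in
/-- Case `λᵢ ≡ 0` of the classification of integral surfaces of the distribution `Δ` of a
bi-umbilical hypersurface of type number two: the surface `z` lies on a two-dimensional
sphere of radius `1/|ν|` in a three-dimensional affine subspace of `ℝ^{n+1}`. -/
theorem biumbilical_case_lambda_zero
    (n : ℕ) (hn : 3 ≤ n)
    (D : Set (ℝ × ℝ)) (hD : IsOpen D) (hconn : IsConnected D)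
    (z X Y N : ℝ × ℝ → EuclideanSpace ℝ (Fin (n + 1)))
    (e : Fin (n - 2) → ℝ × ℝ → EuclideanSpace ℝ (Fin (n + 1)))
    (Ec Gc γ₁ γ₂ ν : ℝ × ℝ → ℝ) (lam : Fin (n - 2) → ℝ × ℝ → ℝ)
    (hz : ContDiffOn ℝ (⊤ : ℕ∞) z D) (hX : ContDiffOn ℝ (⊤ : ℕ∞) X D) (hY : ContDiffOn ℝ (⊤ : ℕ∞) Y D)
    (hN : ContDiffOn ℝ (⊤ : ℕ∞) N D) (he : ∀ i, ContDiffOn ℝ (⊤ : ℕ∞) (e i) D)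
    (hEc : ContDiffOn ℝ (⊤ : ℕ∞) Ec D) (hGc : ContDiffOn ℝ (⊤ : ℕ∞) Gc D)
    (hγ₁ : ContDiffOn ℝ (⊤ : ℕ∞) γ₁ D) (hγ₂ : ContDiffOn ℝ (⊤ : ℕ∞) γ₂ D)
    (hν : ContDiffOn ℝ (⊤ : ℕ∞) ν D) (hlam : ∀ i, ContDiffOn ℝ (⊤ : ℕ∞) (lam i) D)
    (hEpos : ∀ p ∈ D, 0 < Ec p) (hGpos : ∀ p ∈ D, 0 < Gc p)
    (hνne : ∀ p ∈ D, ν p ≠ 0)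
    (horth : OrthFrame n D X Y N e)
    (hzu : ∀ p ∈ D, pu z p = Real.sqrt (Ec p) • X p)
    (hzv : ∀ p ∈ D, pv z p = Real.sqrt (Gc p) • Y p)
    (hXu : ∀ p ∈ D, pu X p =
      Real.sqrt (Ec p) • (γ₁ p • Y p + (∑ i, lam i p • e i p) + ν p • N p))
    (hYu : ∀ p ∈ D, pu Y p = -(Real.sqrt (Ec p) * γ₁ p) • X p)
    (heu : ∀ p ∈ D, ∀ i, pu (e i) p = -(Real.sqrt (Ec p) * lam i p) • X p)
    (hNu : ∀ p ∈ D, pu N p = -(Real.sqrt (Ec p) * ν p) • X p)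
    (hXv : ∀ p ∈ D, pv X p = (Real.sqrt (Gc p) * γ₂ p) • Y p)
    (hYv : ∀ p ∈ D, pv Y p =
      Real.sqrt (Gc p) • ((-(γ₂ p)) • X p + (∑ i, lam i p • e i p) + ν p • N p))
    (hev : ∀ p ∈ D, ∀ i, pv (e i) p = -(Real.sqrt (Gc p) * lam i p) • Y p)
    (hNv : ∀ p ∈ D, pv N p = -(Real.sqrt (Gc p) * ν p) • Y p)
    -- assume in addition that all `λᵢ` vanish
    (hlam0 : ∀ p ∈ D, ∀ i, lam i p = 0) :
    -- the center `p₀ = z + N/ν` is constant on `D`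
    (∀ p ∈ D, ∀ q ∈ D, z p + (ν p)⁻¹ • N p = z q + (ν q)⁻¹ • N q) ∧
    -- so `z` stays at distance `1/|ν|` from it
    (∀ p ∈ D, ∀ q ∈ D, ‖z p - (z q + (ν q)⁻¹ • N q)‖ = 1 / |ν q|) ∧
    -- and `z` stays in a fixed three-dimensional affine subspace
    (∀ p₀ ∈ D, ∀ p ∈ D,
      z p - z p₀ ∈ Submodule.span ℝ
        ({X p₀, Y p₀, N p₀} : Set (EuclideanSpace ℝ (Fin (n + 1))))) := by
  classical
  -- basic differentiability
  have dz : ∀ p ∈ D, DifferentiableAt ℝ z p := fun p hp => diffAt_of_cd hD hz hp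
  have dX : ∀ p ∈ D, DifferentiableAt ℝ X p := fun p hp => diffAt_of_cd hD hX hp
  have dY : ∀ p ∈ D, DifferentiableAt ℝ Y p := fun p hp => diffAt_of_cd hD hY hp
  have dN : ∀ p ∈ D, DifferentiableAt ℝ N p := fun p hp => diffAt_of_cd hD hN hp
  have dν : ∀ p ∈ D, DifferentiableAt ℝ ν p := fun p hp => diffAt_of_cd hD hν hp
  have dγ₁ : ∀ p ∈ D, DifferentiableAt ℝ γ₁ p := fun p hp => diffAt_of_cd hD hγ₁ hp
  have dγ₂ : ∀ p ∈ D, DifferentiableAt ℝ γ₂ p := fun p hp => diffAt_of_cd hD hγ₂ hp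
  have dEc : ∀ p ∈ D, DifferentiableAt ℝ Ec p := fun p hp => diffAt_of_cd hD hEc hp
  have dGc : ∀ p ∈ D, DifferentiableAt ℝ Gc p := fun p hp => diffAt_of_cd hD hGc hp
  have ds : ∀ p ∈ D, DifferentiableAt ℝ (fun q => Real.sqrt (Ec q)) p := fun p hp =>
    (dEc p hp).sqrt (ne_of_gt (hEpos p hp))
  have dt : ∀ p ∈ D, DifferentiableAt ℝ (fun q => Real.sqrt (Gc q)) p := fun p hp =>
    (dGc p hp).sqrt (ne_of_gt (hGpos p hp))
  -- structure equations with λ = 0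
  have sum0 : ∀ p ∈ D, (∑ i, lam i p • e i p) = 0 := fun p hp =>
    Finset.sum_eq_zero (fun i _ => by rw [hlam0 p hp i, zero_smul])
  have hzu' : EqOn (pu z) (fun q => Real.sqrt (Ec q) • X q) D := fun q hq => hzu q hq
  have hzv' : EqOn (pv z) (fun q => Real.sqrt (Gc q) • Y q) D := fun q hq => hzv q hq
  have hXu' : EqOn (pu X)
      (fun q => (Real.sqrt (Ec q) * γ₁ q) • Y q + (Real.sqrt (Ec q) * ν q) • N q) D := by
    intro q hq
    rw [hXu q hq, sum0 q hq]
    simp [smul_add, smul_smul]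
  have hYu' : EqOn (pu Y) (fun q => (-(Real.sqrt (Ec q) * γ₁ q)) • X q) D :=
    fun q hq => hYu q hq
  have hXv' : EqOn (pv X) (fun q => (Real.sqrt (Gc q) * γ₂ q) • Y q) D :=
    fun q hq => hXv q hq
  have hYv' : EqOn (pv Y)
      (fun q => (-(Real.sqrt (Gc q) * γ₂ q)) • X q + (Real.sqrt (Gc q) * ν q) • N q) D := by
    intro q hq
    rw [hYv q hq, sum0 q hq]
    simp [smul_add, smul_smul, mul_neg, neg_smul]
  have hNu' : EqOn (pu N) (fun q => (-(Real.sqrt (Ec q) * ν q)) • X q) D :=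
    fun q hq => hNu q hq
  have hNv' : EqOn (pv N) (fun q => (-(Real.sqrt (Gc q) * ν q)) • Y q) D :=
    fun q hq => hNv q hq
  -- pu ν = 0 on D
  have hpuν : ∀ p ∈ D, pu ν p = 0 := by
    intro p hp
    obtain ⟨hXX, hYY, hNN, hXY, hXN, hYN, -, -⟩ := horth p hp
    have hYX : ⟪Y p, X p⟫ = 0 := by rw [real_inner_comm]; exact hXY
    have hNX : ⟪N p, X p⟫ = 0 := by rw [real_inner_comm]; exact hXN
    have hNY : ⟪N p, Y p⟫ = 0 := by rw [real_inner_comm]; exact hYN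
    have hYup : fderiv ℝ Y p ((1:ℝ),(0:ℝ)) = (-(Real.sqrt (Ec p) * γ₁ p)) • X p := hYu' hp
    have hXvp : fderiv ℝ X p ((0:ℝ),(1:ℝ)) = (Real.sqrt (Gc p) * γ₂ p) • Y p := hXv' hp
    have hXup : fderiv ℝ X p ((1:ℝ),(0:ℝ)) =
        (Real.sqrt (Ec p) * γ₁ p) • Y p + (Real.sqrt (Ec p) * ν p) • N p := hXu' hp
    have hNup : fderiv ℝ N p ((1:ℝ),(0:ℝ)) = (-(Real.sqrt (Ec p) * ν p)) • X p := hNu' hp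
    -- mixed partials of z : compute pu √G
    have hA : pu (pv z) p = pv (pu z) p := mixed_symm hD hz hp
    have hLz : pu (pv z) p =
        (fderiv ℝ (fun q => Real.sqrt (Gc q)) p (1,0)) • Y p
          + Real.sqrt (Gc p) • ((-(Real.sqrt (Ec p) * γ₁ p)) • X p) := by
      show fderiv ℝ (pv z) p (1,0) = _
      rw [pd_congr hD hzv' hp, pd_smul (dt p hp) (dY p hp), hYup]
    have hRz : pv (pu z) p =
        (fderiv ℝ (fun q => Real.sqrt (Ec q)) p (0,1)) • X p
          + Real.sqrt (Ec p) • ((Real.sqrt (Gc p) * γ₂ p) • Y p) := by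
      show fderiv ℝ (pu z) p (0,1) = _
      rw [pd_congr hD hzu' hp, pd_smul (ds p hp) (dX p hp), hXvp]
    have ht1 : fderiv ℝ (fun q => Real.sqrt (Gc q)) p (1,0)
        = Real.sqrt (Ec p) * (Real.sqrt (Gc p) * γ₂ p) := by
      have h := hA
      rw [hLz, hRz] at h
      have h2 := congrArg (fun w => (inner ℝ (Y p) w : ℝ)) h
      simp only [inner_add_right, inner_smul_right, hYY, hYX, mul_zero, mul_one,
        add_zero, zero_add] at h2
      linarith
    -- mixed partials of Y : compute pu (√G ν)
    have hB : pu (pv Y) p = pv (pu Y) p := mixed_symm hD hY hp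
    have hda : DifferentiableAt ℝ (fun q => -(Real.sqrt (Gc q) * γ₂ q)) p :=
      ((dt p hp).mul (dγ₂ p hp)).neg
    have hdb : DifferentiableAt ℝ (fun q => Real.sqrt (Gc q) * ν q) p :=
      (dt p hp).mul (dν p hp)
    have hdc : DifferentiableAt ℝ (fun q => -(Real.sqrt (Ec q) * γ₁ q)) p :=
      ((ds p hp).mul (dγ₁ p hp)).neg
    have hLY : pu (pv Y) p =
        (fderiv ℝ (fun q => -(Real.sqrt (Gc q) * γ₂ q)) p (1,0)) • X p
          + (-(Real.sqrt (Gc p) * γ₂ p)) •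
              ((Real.sqrt (Ec p) * γ₁ p) • Y p + (Real.sqrt (Ec p) * ν p) • N p)
          + ((fderiv ℝ (fun q => Real.sqrt (Gc q) * ν q) p (1,0)) • N p
          + (Real.sqrt (Gc p) * ν p) • ((-(Real.sqrt (Ec p) * ν p)) • X p)) := by
      show fderiv ℝ (pv Y) p (1,0) = _
      rw [pd_congr hD hYv' hp,
        pd_add (f := fun q => (-(Real.sqrt (Gc q) * γ₂ q)) • X q) (g := fun q => (Real.sqrt (Gc q) * ν q) • N q) (hda.smul (dX p hp)) (hdb.smul (dN p hp)),
        pd_smul hda (dX p hp), pd_smul hdb (dN p hp), hXup, hNup]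
    have hRY : pv (pu Y) p =
        (fderiv ℝ (fun q => -(Real.sqrt (Ec q) * γ₁ q)) p (0,1)) • X p
          + (-(Real.sqrt (Ec p) * γ₁ p)) • ((Real.sqrt (Gc p) * γ₂ p) • Y p) := by
      show fderiv ℝ (pu Y) p (0,1) = _
      rw [pd_congr hD hYu' hp, pd_smul hdc (dX p hp), hXvp]
    have hb1 : fderiv ℝ (fun q => Real.sqrt (Gc q) * ν q) p (1,0)
        = (Real.sqrt (Gc p) * γ₂ p) * (Real.sqrt (Ec p) * ν p) := by
      have h := hB
      rw [hLY, hRY] at h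
      have h2 := congrArg (fun w => (inner ℝ (N p) w : ℝ)) h
      simp only [inner_add_right, inner_smul_right, hNN, hNX, hNY, mul_zero, mul_one,
        add_zero, zero_add] at h2
      linarith
    have hb2 : fderiv ℝ (fun q => Real.sqrt (Gc q) * ν q) p (1,0)
        = (fderiv ℝ (fun q => Real.sqrt (Gc q)) p (1,0)) * ν p
          + Real.sqrt (Gc p) * (fderiv ℝ ν p (1,0)) :=
      pd_mul (dt p hp) (dν p hp) (1,0)
    have htne : Real.sqrt (Gc p) ≠ 0 := ne_of_gt (Real.sqrt_pos.2 (hGpos p hp))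
    have hfin : Real.sqrt (Gc p) * (fderiv ℝ ν p (1,0)) = 0 := by
      rw [ht1] at hb2
      linear_combination hb1 - hb2
    show fderiv ℝ ν p (1,0) = 0
    exact (mul_eq_zero.1 hfin).resolve_left htne
  -- pv ν = 0 on D
  have hpvν : ∀ p ∈ D, pv ν p = 0 := by
    intro p hp
    obtain ⟨hXX, hYY, hNN, hXY, hXN, hYN, -, -⟩ := horth p hp
    have hYX : ⟪Y p, X p⟫ = 0 := by rw [real_inner_comm]; exact hXY
    have hNX : ⟪N p, X p⟫ = 0 := by rw [real_inner_comm]; exact hXN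
    have hNY : ⟪N p, Y p⟫ = 0 := by rw [real_inner_comm]; exact hYN
    have hYup : fderiv ℝ Y p ((1:ℝ),(0:ℝ)) = (-(Real.sqrt (Ec p) * γ₁ p)) • X p := hYu' hp
    have hXvp : fderiv ℝ X p ((0:ℝ),(1:ℝ)) = (Real.sqrt (Gc p) * γ₂ p) • Y p := hXv' hp
    have hYvp : fderiv ℝ Y p ((0:ℝ),(1:ℝ)) =
        (-(Real.sqrt (Gc p) * γ₂ p)) • X p + (Real.sqrt (Gc p) * ν p) • N p := hYv' hp
    have hNvp : fderiv ℝ N p ((0:ℝ),(1:ℝ)) = (-(Real.sqrt (Gc p) * ν p)) • Y p := hNv' hp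
    -- mixed partials of z : compute pv √E
    have hA : pu (pv z) p = pv (pu z) p := mixed_symm hD hz hp
    have hLz : pu (pv z) p =
        (fderiv ℝ (fun q => Real.sqrt (Gc q)) p (1,0)) • Y p
          + Real.sqrt (Gc p) • ((-(Real.sqrt (Ec p) * γ₁ p)) • X p) := by
      show fderiv ℝ (pv z) p (1,0) = _
      rw [pd_congr hD hzv' hp, pd_smul (dt p hp) (dY p hp), hYup]
    have hRz : pv (pu z) p =
        (fderiv ℝ (fun q => Real.sqrt (Ec q)) p (0,1)) • X p
          + Real.sqrt (Ec p) • ((Real.sqrt (Gc p) * γ₂ p) • Y p) := by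
      show fderiv ℝ (pu z) p (0,1) = _
      rw [pd_congr hD hzu' hp, pd_smul (ds p hp) (dX p hp), hXvp]
    have hs1 : fderiv ℝ (fun q => Real.sqrt (Ec q)) p (0,1)
        = -(Real.sqrt (Gc p) * (Real.sqrt (Ec p) * γ₁ p)) := by
      have h := hA
      rw [hLz, hRz] at h
      have h2 := congrArg (fun w => (inner ℝ (X p) w : ℝ)) h
      simp only [inner_add_right, inner_smul_right, hXX, hXY, mul_zero, mul_one,
        add_zero, zero_add] at h2
      linear_combination -h2
    -- mixed partials of X : compute pv (√E ν)
    have hC : pu (pv X) p = pv (pu X) p := mixed_symm hD hX hp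
    have hda : DifferentiableAt ℝ (fun q => Real.sqrt (Ec q) * γ₁ q) p :=
      (ds p hp).mul (dγ₁ p hp)
    have hdb : DifferentiableAt ℝ (fun q => Real.sqrt (Ec q) * ν q) p :=
      (ds p hp).mul (dν p hp)
    have hdc : DifferentiableAt ℝ (fun q => Real.sqrt (Gc q) * γ₂ q) p :=
      (dt p hp).mul (dγ₂ p hp)
    have hLX : pu (pv X) p =
        (fderiv ℝ (fun q => Real.sqrt (Gc q) * γ₂ q) p (1,0)) • Y p
          + (Real.sqrt (Gc p) * γ₂ p) • ((-(Real.sqrt (Ec p) * γ₁ p)) • X p) := by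
      show fderiv ℝ (pv X) p (1,0) = _
      rw [pd_congr hD hXv' hp, pd_smul hdc (dY p hp), hYup]
    have hRX : pv (pu X) p =
        (fderiv ℝ (fun q => Real.sqrt (Ec q) * γ₁ q) p (0,1)) • Y p
          + (Real.sqrt (Ec p) * γ₁ p) •
              ((-(Real.sqrt (Gc p) * γ₂ p)) • X p + (Real.sqrt (Gc p) * ν p) • N p)
          + ((fderiv ℝ (fun q => Real.sqrt (Ec q) * ν q) p (0,1)) • N p
          + (Real.sqrt (Ec p) * ν p) • ((-(Real.sqrt (Gc p) * ν p)) • Y p)) := by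
      show fderiv ℝ (pu X) p (0,1) = _
      rw [pd_congr hD hXu' hp,
        pd_add (f := fun q => (Real.sqrt (Ec q) * γ₁ q) • Y q) (g := fun q => (Real.sqrt (Ec q) * ν q) • N q) (hda.smul (dY p hp)) (hdb.smul (dN p hp)),
        pd_smul hda (dY p hp), pd_smul hdb (dN p hp), hYvp, hNvp]
    have hb1 : fderiv ℝ (fun q => Real.sqrt (Ec q) * ν q) p (0,1)
        = -((Real.sqrt (Ec p) * γ₁ p) * (Real.sqrt (Gc p) * ν p)) := by
      have h := hC
      rw [hLX, hRX] at h
      have h2 := congrArg (fun w => (inner ℝ (N p) w : ℝ)) h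
      simp only [inner_add_right, inner_smul_right, hNN, hNX, hNY, mul_zero, mul_one,
        add_zero, zero_add] at h2
      linear_combination -h2
    have hb2 : fderiv ℝ (fun q => Real.sqrt (Ec q) * ν q) p (0,1)
        = (fderiv ℝ (fun q => Real.sqrt (Ec q)) p (0,1)) * ν p
          + Real.sqrt (Ec p) * (fderiv ℝ ν p (0,1)) :=
      pd_mul (ds p hp) (dν p hp) (0,1)
    have hsne : Real.sqrt (Ec p) ≠ 0 := ne_of_gt (Real.sqrt_pos.2 (hEpos p hp))
    have hfin : Real.sqrt (Ec p) * (fderiv ℝ ν p (0,1)) = 0 := by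
      rw [hs1] at hb2
      linear_combination hb1 - hb2
    show fderiv ℝ ν p (0,1) = 0
    exact (mul_eq_zero.1 hfin).resolve_left hsne
  -- ν is constant on D
  have hνc : ∀ p ∈ D, ∀ q ∈ D, ν p = ν q := fun p hp q hq =>
    const_of_pd_zero hD hconn.isPreconnected dν
      (fun x hx => fderiv_eq_zero_of_partials (hpuν x hx) (hpvν x hx)) hp hq
  -- Part 1 : the center is constant
  have key1 : ∀ p ∈ D, ∀ q ∈ D, z p + (ν p)⁻¹ • N p = z q + (ν q)⁻¹ • N q := by
    intro p hp q hq
    have hc0 : ν q ≠ 0 := hνne q hq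
    have hfd : ∀ x ∈ D, DifferentiableAt ℝ (fun r => z r + (ν q)⁻¹ • N r) x := fun x hx =>
      (dz x hx).add ((dN x hx).const_smul ((ν q)⁻¹))
    have hzero : ∀ x ∈ D, fderiv ℝ (fun r => z r + (ν q)⁻¹ • N r) x = 0 := by
      intro x hx
      have hzux : fderiv ℝ z x ((1:ℝ),(0:ℝ)) = Real.sqrt (Ec x) • X x := hzu x hx
      have hzvx : fderiv ℝ z x ((0:ℝ),(1:ℝ)) = Real.sqrt (Gc x) • Y x := hzv x hx
      have hNux : fderiv ℝ N x ((1:ℝ),(0:ℝ)) = (-(Real.sqrt (Ec x) * ν x)) • X x := hNu' hx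
      have hNvx : fderiv ℝ N x ((0:ℝ),(1:ℝ)) = (-(Real.sqrt (Gc x) * ν x)) • Y x := hNv' hx
      have hνx : ν x = ν q := hνc x hx q hq
      apply fderiv_eq_zero_of_partials
      · show fderiv ℝ (fun r => z r + (ν q)⁻¹ • N r) x (1,0) = 0
        rw [pd_add (g := fun r => (ν q)⁻¹ • N r) (dz x hx) ((dN x hx).const_smul ((ν q)⁻¹)),
          fderiv_fun_const_smul (dN x hx) ((ν q)⁻¹)]
        rw [ContinuousLinearMap.smul_apply, hzux, hNux, hνx, smul_smul]
        rw [show (ν q)⁻¹ * -(Real.sqrt (Ec x) * ν q) = -Real.sqrt (Ec x) by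
          field_simp]
        rw [← add_smul]
        simp
      · show fderiv ℝ (fun r => z r + (ν q)⁻¹ • N r) x (0,1) = 0
        rw [pd_add (g := fun r => (ν q)⁻¹ • N r) (dz x hx) ((dN x hx).const_smul ((ν q)⁻¹)),
          fderiv_fun_const_smul (dN x hx) ((ν q)⁻¹)]
        rw [ContinuousLinearMap.smul_apply, hzvx, hNvx, hνx, smul_smul]
        rw [show (ν q)⁻¹ * -(Real.sqrt (Gc x) * ν q) = -Real.sqrt (Gc x) by
          field_simp]
        rw [← add_smul]
        simp
    rw [hνc p hp q hq]
    exact const_of_pd_zero hD hconn.isPreconnected hfd hzero hp hq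
  -- Part 2 : distance to the center
  have key2 : ∀ p ∈ D, ∀ q ∈ D, ‖z p - (z q + (ν q)⁻¹ • N q)‖ = 1 / |ν q| := by
    intro p hp q hq
    obtain ⟨-, -, hNN, -, -, -, -, -⟩ := horth p hp
    have hNnorm : ‖N p‖ = 1 := by
      have h2 : ‖N p‖ ^ 2 = 1 := by rw [← real_inner_self_eq_norm_sq]; exact hNN
      rw [← Real.sqrt_sq (norm_nonneg (N p)), h2, Real.sqrt_one]
    have h := key1 p hp q hq
    have hdiff : z p - (z q + (ν q)⁻¹ • N q) = -((ν p)⁻¹ • N p) := by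
      rw [← h]; abel
    rw [hdiff, norm_neg, norm_smul, hNnorm, mul_one, hνc p hp q hq]
    simp [Real.norm_eq_abs, abs_inv, one_div]
  -- Part 3 : z stays in a fixed 3-dimensional subspace
  have key3 : ∀ p₀ ∈ D, ∀ p ∈ D,
      z p - z p₀ ∈ Submodule.span ℝ
        ({X p₀, Y p₀, N p₀} : Set (EuclideanSpace ℝ (Fin (n + 1)))) := by
    intro p₀ hp₀ p hp
    set S : Submodule ℝ (EuclideanSpace ℝ (Fin (n + 1))) :=
      Submodule.span ℝ ({X p₀, Y p₀, N p₀} : Set (EuclideanSpace ℝ (Fin (n + 1)))) with hS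
    set Q : EuclideanSpace ℝ (Fin (n + 1)) →L[ℝ] Sᗮ := Sᗮ.orthogonalProjectionOnto with hQdef
    have hmem : ∀ v, Q v = 0 ↔ v ∈ S := fun v => by
      rw [hQdef, Submodule.orthogonalProjectionOnto_eq_zero_iff, Submodule.orthogonal_orthogonal]
    have dQ : ∀ (W : ℝ × ℝ → EuclideanSpace ℝ (Fin (n + 1))) (x : ℝ × ℝ),
        DifferentiableAt ℝ W x → DifferentiableAt ℝ (fun r => Q (W r)) x :=
      fun W x hW => Q.differentiableAt.comp x hW
    -- the auxiliary function G
    have dG : ∀ x ∈ D, DifferentiableAt ℝ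
        (fun r => (⟪Q (X r), Q (X r)⟫ + ⟪Q (Y r), Q (Y r)⟫) + ⟪Q (N r), Q (N r)⟫) x := by
      intro x hx
      exact (((dQ X x (dX x hx)).inner ℝ (dQ X x (dX x hx))).add
        ((dQ Y x (dY x hx)).inner ℝ (dQ Y x (dY x hx)))).add
        ((dQ N x (dN x hx)).inner ℝ (dQ N x (dN x hx)))
    have gen : ∀ x ∈ D, ∀ (w : ℝ × ℝ) (a b c : ℝ),
        fderiv ℝ X x w = a • Y x + b • N x →
        fderiv ℝ Y x w = -a • X x + c • N x →
        fderiv ℝ N x w = -b • X x + -c • Y x →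
        fderiv ℝ (fun r => (⟪Q (X r), Q (X r)⟫ + ⟪Q (Y r), Q (Y r)⟫) + ⟪Q (N r), Q (N r)⟫) x w
          = 0 := by
      intro x hx w a b c hXw hYw hNw
      have dqx := dQ X x (dX x hx)
      have dqy := dQ Y x (dY x hx)
      have dqn := dQ N x (dN x hx)
      rw [pd_add ((dqx.inner ℝ dqx).fun_add (dqy.inner ℝ dqy)) (dqn.inner ℝ dqn),
        pd_add (dqx.inner ℝ dqx) (dqy.inner ℝ dqy),
        fderiv_inner_apply ℝ dqx dqx, fderiv_inner_apply ℝ dqy dqy,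
        fderiv_inner_apply ℝ dqn dqn,
        pd_clm Q (dX x hx) w, pd_clm Q (dY x hx) w, pd_clm Q (dN x hx) w,
        hXw, hYw, hNw]
      simp only [map_add, map_smul, inner_add_left, inner_add_right,
        inner_smul_left, inner_smul_right, inner_neg_left, inner_neg_right,
        RCLike.star_def, conj_trivial, map_neg, neg_smul]
      ring
    have hGconst : ∀ x ∈ D,
        ((⟪Q (X x), Q (X x)⟫ + ⟪Q (Y x), Q (Y x)⟫) + ⟪Q (N x), Q (N x)⟫ : ℝ)
          = (⟪Q (X p₀), Q (X p₀)⟫ + ⟪Q (Y p₀), Q (Y p₀)⟫) + ⟪Q (N p₀), Q (N p₀)⟫ := by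
      intro x hx
      exact const_of_pd_zero hD hconn.isPreconnected dG (fun y hy =>
        fderiv_eq_zero_of_partials
          (gen y hy (1,0) (Real.sqrt (Ec y) * γ₁ y) (Real.sqrt (Ec y) * ν y) 0
            (hXu' hy)
            (by rw [show fderiv ℝ Y y ((1:ℝ),(0:ℝ))
                  = (-(Real.sqrt (Ec y) * γ₁ y)) • X y from hYu' hy]; simp)
            (by rw [show fderiv ℝ N y ((1:ℝ),(0:ℝ))
                  = (-(Real.sqrt (Ec y) * ν y)) • X y from hNu' hy]; simp))
          (gen y hy (0,1) (Real.sqrt (Gc y) * γ₂ y) 0 (Real.sqrt (Gc y) * ν y)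
            (by rw [show fderiv ℝ X y ((0:ℝ),(1:ℝ))
                  = (Real.sqrt (Gc y) * γ₂ y) • Y y from hXv' hy]; simp)
            (by rw [show fderiv ℝ Y y ((0:ℝ),(1:ℝ))
                  = (-(Real.sqrt (Gc y) * γ₂ y)) • X y
                    + (Real.sqrt (Gc y) * ν y) • N y from hYv' hy])
            (by rw [show fderiv ℝ N y ((0:ℝ),(1:ℝ))
                  = (-(Real.sqrt (Gc y) * ν y)) • Y y from hNv' hy]; simp))) hx hp₀
    have hX0 : Q (X p₀) = 0 := (hmem _).2 (Submodule.subset_span (by simp))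
    have hY0 : Q (Y p₀) = 0 := (hmem _).2 (Submodule.subset_span (by simp))
    have hN0 : Q (N p₀) = 0 := (hmem _).2 (Submodule.subset_span (by simp))
    have hQ0 : ∀ x ∈ D, Q (X x) = 0 ∧ Q (Y x) = 0 ∧ Q (N x) = 0 := by
      intro x hx
      have h0 := hGconst x hx
      rw [hX0, hY0, hN0] at h0
      simp only [inner_zero_left, add_zero] at h0
      have n1 : (0:ℝ) ≤ ⟪Q (X x), Q (X x)⟫ := real_inner_self_nonneg
      have n2 : (0:ℝ) ≤ ⟪Q (Y x), Q (Y x)⟫ := real_inner_self_nonneg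
      have n3 : (0:ℝ) ≤ ⟪Q (N x), Q (N x)⟫ := real_inner_self_nonneg
      refine ⟨(inner_self_eq_zero (𝕜 := ℝ)).1 (by linarith),
        (inner_self_eq_zero (𝕜 := ℝ)).1 (by linarith),
        (inner_self_eq_zero (𝕜 := ℝ)).1 (by linarith)⟩
    have hfz : ∀ x ∈ D, fderiv ℝ (fun r => Q (z r)) x = 0 := by
      intro x hx
      apply fderiv_eq_zero_of_partials
      · show fderiv ℝ (fun r => Q (z r)) x (1,0) = 0
        rw [pd_clm Q (dz x hx),
          show fderiv ℝ z x ((1:ℝ),(0:ℝ)) = Real.sqrt (Ec x) • X x from hzu x hx,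
          map_smul, (hQ0 x hx).1, smul_zero]
      · show fderiv ℝ (fun r => Q (z r)) x (0,1) = 0
        rw [pd_clm Q (dz x hx),
          show fderiv ℝ z x ((0:ℝ),(1:ℝ)) = Real.sqrt (Gc x) • Y x from hzv x hx,
          map_smul, (hQ0 x hx).2.1, smul_zero]
    have hzc : Q (z p) = Q (z p₀) :=
      const_of_pd_zero hD hconn.isPreconnected (fun x hx => dQ z x (dz x hx)) hfz hp hp₀
    have hfin : Q (z p - z p₀) = 0 := by rw [map_sub, hzc, sub_self]
    exact (hmem _).1 hfin
  exact ⟨key1, key2, key3⟩
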